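/- arXiv:1711.07379 — 3 statements merged into one kernel-verified Lean document; each statement's English description precedes it below -/
import Mathlib

section
/- For r > 1, the following two-sided bound on the ratio of gamma functions holds: √(2/r) < Γ(r/2)/Γ((r+1)/2) < √(2/(r - 1/2)). -/
open Real

lemma gamma_midpoint_sq {a b : ℝ} (ha : 0 < a) (hb : 0 < b) :
    Gamma ((a + b) / 2) ^ 2 ≤ Gamma a * Gamma b := by
  have h := convexOn_log_Gamma.2 (Set.mem_Ioi.2 ha) (Set.mem_Ioi.2 hb)
    (by norm_num : (0:ℝ) ≤ 1/2) (by norm_num : (0:ℝ) ≤ 1/2) (by norm_num)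
  simp only [Function.comp_apply, smul_eq_mul] at h
  have hmid : (0:ℝ) < (a + b) / 2 := by linarith
  have hga := Gamma_pos_of_pos ha
  have hgb := Gamma_pos_of_pos hb
  have hgm := Gamma_pos_of_pos hmid
  have h2 : Real.log (Gamma ((a + b) / 2) ^ 2) ≤ Real.log (Gamma a * Gamma b) := by
    rw [Real.log_pow, Real.log_mul hga.ne' hgb.ne']
    have he : 1/2 * a + 1/2 * b = (a + b) / 2 := by ring
    rw [he] at h
    push_cast
    linarith
  exact (Real.log_le_log_iff (by positivity) (by positivity)).1 h2

/-- The auxiliary function `G x = (Γ(x+1)/Γ(x+1/2))²`. -/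
noncomputable def gautschiG (x : ℝ) : ℝ := (Gamma (x + 1) / Gamma (x + 1/2)) ^ 2

lemma gautschiG_pos {x : ℝ} (hx : 0 < x) : 0 < gautschiG x := by
  have h1 := Gamma_pos_of_pos (by linarith : (0:ℝ) < x + 1)
  have h2 := Gamma_pos_of_pos (by linarith : (0:ℝ) < x + 1/2)
  unfold gautschiG; positivity

lemma gautschiG_ge {x : ℝ} (hx : 0 < x) : x ≤ gautschiG x := by
  have h1 := Gamma_pos_of_pos (by linarith : (0:ℝ) < x + 1)
  have h2 := Gamma_pos_of_pos (by linarith : (0:ℝ) < x + 1/2)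
  have h3 := Gamma_pos_of_pos hx
  have hm := gamma_midpoint_sq hx (by linarith : (0:ℝ) < x + 1)
  have he : (x + (x + 1)) / 2 = x + 1/2 := by ring
  rw [he] at hm
  have hrec : Gamma (x + 1) = x * Gamma x := Gamma_add_one hx.ne'
  rw [gautschiG, div_pow, le_div_iff₀ (by positivity)]
  calc x * Gamma (x + 1/2) ^ 2 ≤ x * (Gamma x * Gamma (x + 1)) := by nlinarith
    _ = Gamma (x + 1) ^ 2 := by rw [hrec]; ring

lemma gautschiG_le {x : ℝ} (hx : 0 < x) : gautschiG x ≤ x + 1/2 := by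
  have h1 := Gamma_pos_of_pos (by linarith : (0:ℝ) < x + 1)
  have h2 := Gamma_pos_of_pos (by linarith : (0:ℝ) < x + 1/2)
  have h3 := Gamma_pos_of_pos (by linarith : (0:ℝ) < x + 3/2)
  have hm := gamma_midpoint_sq (by linarith : (0:ℝ) < x + 1/2)
    (by linarith : (0:ℝ) < x + 3/2)
  have he : ((x + 1/2) + (x + 3/2)) / 2 = x + 1 := by ring
  rw [he] at hm
  have hrec : Gamma (x + 3/2) = (x + 1/2) * Gamma (x + 1/2) := by
    have : x + 3/2 = (x + 1/2) + 1 := by ring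
    rw [this, Gamma_add_one (by positivity)]
  rw [hrec] at hm
  rw [gautschiG, div_pow, div_le_iff₀ (by positivity)]
  nlinarith

lemma gautschiG_rec {x : ℝ} (hx : 0 < x) :
    gautschiG (x + 1) = ((x + 1) / (x + 1/2)) ^ 2 * gautschiG x := by
  have h2 := Gamma_pos_of_pos (by linarith : (0:ℝ) < x + 1/2)
  have hr1 : Gamma (x + 1 + 1) = (x + 1) * Gamma (x + 1) :=
    Gamma_add_one (by positivity)
  have hr2 : Gamma (x + 1 + 1/2) = (x + 1/2) * Gamma (x + 1/2) := by
    have : x + 1 + 1/2 = (x + 1/2) + 1 := by ring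
    rw [this, Gamma_add_one (by positivity)]
  unfold gautschiG
  rw [hr1, hr2]
  field_simp

lemma gautschi_step {y t M e : ℝ} (hy : 0 < y) (ht0 : 0 ≤ t) (ht1 : t * (y + 1) ≤ 1)
    (hM : 1 ≤ M) (he : 0 < e) :
    (y + 1) ^ 2 * (y + 1/4 - e * M) ≤ (y + 5/4 - e * (M + t)) * (y + 1/2) ^ 2 := by
  have k1 : t * (y + 1/2) ^ 2 ≤ t * ((y + 3/4) * (y + 1)) := by nlinarith
  have k2 : t * ((y + 3/4) * (y + 1)) ≤ y + 3/4 := by nlinarith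
  have k3 : y + 3/4 ≤ M * (y + 3/4) := by nlinarith
  have k5 : M * (y + 1) ^ 2 = M * (y + 1/2) ^ 2 + M * (y + 3/4) := by ring
  have k4 : (M + t) * (y + 1/2) ^ 2 ≤ M * (y + 1) ^ 2 := by nlinarith [k1, k2, k3, k5]
  have k6 : e * ((M + t) * (y + 1/2) ^ 2) ≤ e * (M * (y + 1) ^ 2) :=
    mul_le_mul_of_nonneg_left k4 he.le
  nlinarith [k6]

lemma gautschiG_ge_quarter {x : ℝ} (hx : 0 < x) : x + 1/4 ≤ gautschiG x := by
  by_contra hcon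
  push_neg at hcon
  obtain ⟨ε, hε⟩ : ∃ e : ℝ, e = x + 1/4 - gautschiG x := ⟨_, rfl⟩
  have hεpos : 0 < ε := by rw [hε]; linarith
  obtain ⟨c, hc⟩ : ∃ e : ℝ, e = 1 / (x + 1) := ⟨_, rfl⟩
  have hcpos : 0 < c := by rw [hc]; positivity
  have key : ∀ n : ℕ, gautschiG (x + n) ≤
      x + n + 1/4 - ε * (1 + c * ∑ i ∈ Finset.range n, (1 / (i + 1) : ℝ)) := by
    intro n
    induction n with
    | zero =>
      simp only [Nat.cast_zero, add_zero, Finset.range_zero, Finset.sum_empty,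
        mul_zero, mul_one]
      linarith [hε]
    | succ n ih =>
      have hypos : 0 < x + (n:ℝ) := by positivity
      have hrec := gautschiG_rec hypos
      have hSnn : (0:ℝ) ≤ ∑ i ∈ Finset.range n, (1 / (i + 1) : ℝ) :=
        Finset.sum_nonneg fun i _ => by positivity
      obtain ⟨S, hS⟩ : ∃ s : ℝ, s = ∑ i ∈ Finset.range n, (1 / (i + 1) : ℝ) := ⟨_, rfl⟩
      obtain ⟨t, ht⟩ : ∃ s : ℝ, s = c * (1 / ((n:ℝ) + 1)) := ⟨_, rfl⟩
      have hMge : (1:ℝ) ≤ 1 + c * S := by rw [hS]; nlinarith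
      have ht0 : 0 ≤ t := by rw [ht]; positivity
      have ht1 : t * ((x + n) + 1) ≤ 1 := by
        rw [ht, hc, div_mul_div_comm, one_mul, div_mul_eq_mul_div,
          div_le_one (by positivity)]
        have hn' : (0:ℝ) ≤ (n:ℝ) := Nat.cast_nonneg n
        nlinarith
      have hsum : ∑ i ∈ Finset.range (n+1), (1 / (i + 1) : ℝ) = S + 1 / ((n:ℝ) + 1) := by
        rw [Finset.sum_range_succ, hS]
      have hcast : x + ((n:ℕ) + 1 : ℕ) = (x + n) + 1 := by push_cast; ring
      rw [hcast, hrec, hsum]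
      have h1 : gautschiG (x + n) ≤ (x + n) + 1/4 - ε * (1 + c * S) := by
        rw [hS]; exact ih
      have hq : ((x + n + 1) / (x + n + 1/2)) ^ 2 * gautschiG (x + n)
          ≤ ((x + n + 1) / (x + n + 1/2)) ^ 2 * ((x + n) + 1/4 - ε * (1 + c * S)) := by
        have : (0:ℝ) < ((x + n + 1) / (x + n + 1/2)) ^ 2 := by positivity
        nlinarith
      have hstep := gautschi_step hypos ht0 ht1 hMge hεpos
      have hdiv : ((x + n + 1) / (x + n + 1/2)) ^ 2 * ((x + n) + 1/4 - ε * (1 + c * S))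
          ≤ (x + n) + 1 + 1/4 - ε * (1 + c * S + t) := by
        rw [div_pow, div_mul_eq_mul_div, div_le_iff₀ (by positivity)]
        have := gautschi_step hypos ht0 ht1 hMge hεpos (M := 1 + c * S) (t := t) (e := ε)
        nlinarith [this]
      have hgoal : (x + n) + 1 + 1/4 - ε * (1 + c * S + t)
          = x + (n + 1 : ℝ) + 1/4 - ε * (1 + c * (S + 1 / ((n:ℝ) + 1))) := by
        rw [ht]; ring
      push_cast
      push_cast at hq hdiv hgoal
      linarith
  have hbound : ∀ n : ℕ, ∑ i ∈ Finset.range n, (1 / (i + 1) : ℝ) ≤ (1/4) / (ε * c) := by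
    intro n
    obtain ⟨S, hS⟩ : ∃ s : ℝ, s = ∑ i ∈ Finset.range n, (1 / (i + 1) : ℝ) := ⟨_, rfl⟩
    have hSnn : (0:ℝ) ≤ S := hS ▸ Finset.sum_nonneg fun i _ => by positivity
    have h1 := key n
    rw [← hS] at h1
    have h2 := gautschiG_ge (by positivity : (0:ℝ) < x + n)
    have h4 : ε * c * S ≤ 1/4 := by nlinarith
    rw [← hS, le_div_iff₀ (by positivity)]
    linarith [h4]
  obtain ⟨n, hn⟩ := (Real.tendsto_sum_range_one_div_nat_succ_atTop.eventually_gt_atTop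
    ((1/4) / (ε * c))).exists
  exact absurd (hbound n) (not_le.2 hn)

lemma gautschiG_gt_quarter {x : ℝ} (hx : 0 < x) : x + 1/4 < gautschiG x := by
  have h1 := gautschiG_ge_quarter (by linarith : (0:ℝ) < x + 1)
  have hrec := gautschiG_rec hx
  have hq : (0:ℝ) < ((x + 1) / (x + 1/2)) ^ 2 := by positivity
  -- gautschiG x = gautschiG (x+1) * ((x+1/2)/(x+1))^2
  have hGx : gautschiG x = gautschiG (x + 1) * (x + 1/2) ^ 2 / (x + 1) ^ 2 := by
    rw [hrec]; field_simp
  rw [hGx, lt_div_iff₀ (by positivity)]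
  have : (x + 1 + 1/4) * (x + 1/2) ^ 2 ≤ gautschiG (x + 1) * (x + 1/2) ^ 2 := by nlinarith
  nlinarith

lemma gautschiG_lt_half {x : ℝ} (hx : 0 < x) : gautschiG x < x + 1/2 := by
  have h1 := gautschiG_le (by linarith : (0:ℝ) < x + 1)
  have hrec := gautschiG_rec hx
  have hGx : gautschiG x = gautschiG (x + 1) * (x + 1/2) ^ 2 / (x + 1) ^ 2 := by
    rw [hrec]; field_simp
  rw [hGx, div_lt_iff₀ (by positivity)]
  have : gautschiG (x + 1) * (x + 1/2) ^ 2 ≤ (x + 1 + 1/2) * (x + 1/2) ^ 2 := by nlinarith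
  nlinarith

/-- For `r > 1`: `√(2/r) < Γ(r/2)/Γ((r+1)/2) < √(2/(r - 1/2))`. -/
theorem gamma_ratio_bounds (r : ℝ) (hr : 1 < r) :
    Real.sqrt (2 / r) < Real.Gamma (r / 2) / Real.Gamma ((r + 1) / 2) ∧
      Real.Gamma (r / 2) / Real.Gamma ((r + 1) / 2) < Real.sqrt (2 / (r - 1 / 2)) := by
  have hx : (0:ℝ) < (r - 1) / 2 := by linarith
  have e1 : (r - 1) / 2 + 1/2 = r / 2 := by ring
  have e2 : (r - 1) / 2 + 1 = (r + 1) / 2 := by ring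
  have hg1 : 0 < Gamma (r / 2) := Gamma_pos_of_pos (by linarith)
  have hg2 : 0 < Gamma ((r + 1) / 2) := Gamma_pos_of_pos (by linarith)
  have hρ : 0 < Gamma (r / 2) / Gamma ((r + 1) / 2) := by positivity
  have hGval : gautschiG ((r - 1) / 2) = (Gamma ((r + 1) / 2) / Gamma (r / 2)) ^ 2 := by
    rw [gautschiG, e1, e2]
  have hGpos := gautschiG_pos hx
  have hlo := gautschiG_gt_quarter hx
  have hhi := gautschiG_lt_half hx
  rw [hGval] at hGpos hlo hhi
  constructor
  · rw [show Real.sqrt (2 / r) = Real.sqrt (2 / r) from rfl]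
    rw [Real.sqrt_lt' hρ]
    rw [div_pow]
    rw [div_lt_div_iff₀ (by linarith) (by positivity)]
    have h2 : (Gamma ((r + 1) / 2) / Gamma (r / 2)) ^ 2 < r / 2 := by linarith
    rw [div_pow, div_lt_iff₀ (by positivity)] at h2
    nlinarith
  · rw [show Real.Gamma = Gamma from rfl]
    rw [← Real.sqrt_sq hρ.le]
    apply Real.sqrt_lt_sqrt (by positivity)
    rw [div_pow]
    rw [div_lt_div_iff₀ (by positivity) (by linarith)]
    have h2 : (r - 1/2) / 2 < (Gamma ((r + 1) / 2) / Gamma (r / 2)) ^ 2 := by linarith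
    rw [div_pow, lt_div_iff₀ (by positivity)] at h2
    nlinarith
end

section
/- The SVG(r,σ,0) distribution is a fixed point of the centered equilibrium transformation of order r: if Z ~ SVG(r,σ,0), then E[Z f(Z)] = σ² E[Z f''(Z) + r f'(Z)] for all twice-differentiable f with f, f', f'' bounded. -/
/-!
Condition on `X = x`: then `Z = σ√x·Y` is a centered Gaussian, and Stein's lemma
`E[(Y - μ) g(Y)] = v E[g'(Y)]` for `Y ~ N(μ, v)` gives `E[Z f(Z) | X] = σ² X E[f'(Z) | X]`.
Condition instead on `Y = y`: Stein's identity `b E[X h(X)] = E[X h'(X) + a h(X)]` for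
`X ~ Γ(a, b)`, applied with `h(x) = f'(σ√x·y)`, turns `E[X f'(Z)]` into `E[Z f''(Z) + r f'(Z)]`.
Both identities are integrations by parts against the density, and independence of `X` and `Y`
lets the whole computation take place on the product measure, where Fubini swaps the two steps.
-/

open MeasureTheory ProbabilityTheory Real Set Filter Topology
open scoped NNReal

lemma sqrt_le_one_add_abs (x : ℝ) : √x ≤ 1 + |x| := by
  refine (sqrt_le_sqrt (le_abs_self x)).trans (sqrt_le_iff.2 ⟨by positivity, ?_⟩)
  nlinarith [abs_nonneg x]

lemma abs_mul_sqrt_mul_le (σ x y : ℝ) : |σ * √x * y| ≤ |σ| * ((1 + |x|) * (1 + |y|)) := by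
  rw [abs_mul, abs_mul, abs_of_nonneg (sqrt_nonneg x), mul_assoc]
  gcongr
  · exact sqrt_le_one_add_abs x
  · linarith

namespace ProbabilityTheory

lemma hasDerivAt_gaussianPDFReal (μ : ℝ) (v : ℝ≥0) (x : ℝ) :
    HasDerivAt (gaussianPDFReal μ v) (gaussianPDFReal μ v x * (-(x - μ) / v)) x := by
  have hexp : HasDerivAt (fun y ↦ -(y - μ) ^ 2 / (2 * v)) (-(x - μ) / v) x :=
    ((((hasDerivAt_id x).sub_const μ).pow 2).neg.div_const (2 * (v : ℝ))).congr_deriv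
      (by simp only [id]; ring)
  exact (hexp.exp.const_mul (√(2 * π * v))⁻¹).congr_deriv (by rw [gaussianPDFReal]; ring)

lemma integrable_gaussianReal_iff {μ : ℝ} {v : ℝ≥0} (hv : v ≠ 0) {F : ℝ → ℝ} :
    Integrable F (gaussianReal μ v) ↔ Integrable (fun x ↦ gaussianPDFReal μ v x * F x) := by
  rw [gaussianReal_of_var_ne_zero μ hv, integrable_withDensity_iff_integrable_smul'
    (measurable_gaussianPDF μ v) (ae_of_all _ fun _ ↦ gaussianPDF_lt_top)]
  simp [toReal_gaussianPDF]

theorem integral_sub_mul_gaussianReal {μ : ℝ} {v : ℝ≥0} (hv : v ≠ 0) {g : ℝ → ℝ}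
    (hg : Differentiable ℝ g) {C C' : ℝ} (hgC : ∀ x, |g x| ≤ C) (hg'C : ∀ x, |deriv g x| ≤ C') :
    ∫ x, (x - μ) * g x ∂gaussianReal μ v = v * ∫ x, deriv g x ∂gaussianReal μ v := by
  have hpdf : Integrable (gaussianPDFReal μ v) := integrable_gaussianPDFReal μ v
  have hmean : Integrable (fun x ↦ gaussianPDFReal μ v x * (x - μ)) := by
    rw [← integrable_gaussianReal_iff hv]
    exact (memLp_id_gaussianReal 1).integrable le_rfl |>.sub (integrable_const μ)
  have ibp := integral_mul_deriv_eq_deriv_mul_of_integrable (fun x _ ↦ (hg x).hasDerivAt)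
    (fun x _ ↦ hasDerivAt_gaussianPDFReal μ v x)
    (((hmean.div_const (-v)).bdd_mul hg.continuous.aestronglyMeasurable
      (ae_of_all _ fun x ↦ hgC x)).congr (ae_of_all _ fun x ↦ by simp only [Pi.mul_apply]; ring))
    (hpdf.bdd_mul (measurable_deriv g).aestronglyMeasurable (ae_of_all _ fun x ↦ hg'C x))
    (hpdf.bdd_mul hg.continuous.aestronglyMeasurable (ae_of_all _ fun x ↦ hgC x))
  have hv' : (v : ℝ) ≠ 0 := by exact_mod_cast hv
  simp only [integral_gaussianReal_eq_integral_smul hv, smul_eq_mul]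
  calc ∫ x, gaussianPDFReal μ v x * ((x - μ) * g x)
      = -v * ∫ x, g x * (gaussianPDFReal μ v x * (-(x - μ) / v)) := by
        rw [← integral_const_mul]
        congr with x
        field_simp
    _ = v * ∫ x, gaussianPDFReal μ v x * deriv g x := by
        rw [ibp]
        simp only [mul_comm (deriv g _)]
        ring

lemma integrable_one_add_abs_gaussianReal (μ : ℝ) (v : ℝ≥0) :
    Integrable (fun x ↦ 1 + |x|) (gaussianReal μ v) :=
  (integrable_const 1).add ((memLp_id_gaussianReal 1).integrable le_rfl).abs

lemma integral_mul_comp_mul_gaussianReal (c : ℝ) {g : ℝ → ℝ} (hg : Differentiable ℝ g) {C C' : ℝ}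
    (hgC : ∀ x, |g x| ≤ C) (hg'C : ∀ x, |deriv g x| ≤ C') :
    ∫ y, c * y * g (c * y) ∂gaussianReal 0 1 = c ^ 2 * ∫ y, deriv g (c * y) ∂gaussianReal 0 1 := by
  have hderiv (y : ℝ) : deriv (fun y ↦ g (c * y)) y = c * deriv g (c * y) :=
    deriv_comp_mul_left c g y
  have hgc : Differentiable ℝ (fun y ↦ g (c * y)) := hg.comp (differentiable_id.const_mul c)
  have stein := integral_sub_mul_gaussianReal one_ne_zero (μ := 0) hgc (fun y ↦ hgC (c * y))
    (C' := |c| * C') (fun y ↦ by rw [hderiv, abs_mul]; gcongr; exact hg'C _)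
  simp only [sub_zero, hderiv, NNReal.coe_one, one_mul, integral_const_mul] at stein
  simp only [mul_assoc, integral_const_mul, stein]
  ring

section Gamma

variable {a b : ℝ}

lemma integral_gammaMeasure_eq_setIntegral (ha : 0 < a) (hb : 0 < b) (F : ℝ → ℝ) :
    ∫ x, F x ∂gammaMeasure a b = ∫ x in Ioi 0, gammaPDFReal a b x * F x := by
  rw [gammaMeasure, integral_withDensity_eq_integral_toReal_smul (f := gammaPDF a b)
    (measurable_gammaPDFReal a b).ennreal_ofReal (ae_of_all _ fun _ ↦ ENNReal.ofReal_lt_top)]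
  simp only [gammaPDF, ENNReal.toReal_ofReal (gammaPDFReal_nonneg ha hb _), smul_eq_mul]
  rw [← integral_Ici_eq_integral_Ioi, setIntegral_eq_integral_of_forall_compl_eq_zero]
  intro x hx
  rw [gammaPDFReal, if_neg (by simpa using hx), zero_mul]

lemma integrable_gammaMeasure_iff (ha : 0 < a) (hb : 0 < b) {F : ℝ → ℝ} :
    Integrable F (gammaMeasure a b) ↔ IntegrableOn (fun x ↦ gammaPDFReal a b x * F x) (Ioi 0) := by
  rw [gammaMeasure, integrable_withDensity_iff_integrable_smul' (f := gammaPDF a b)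
    (measurable_gammaPDFReal a b).ennreal_ofReal (ae_of_all _ fun _ ↦ ENNReal.ofReal_lt_top)]
  simp only [gammaPDF, ENNReal.toReal_ofReal (gammaPDFReal_nonneg ha hb _), smul_eq_mul]
  rw [← integrableOn_Ici_iff_integrableOn_Ioi, integrableOn_iff_integrable_of_support_subset]
  intro x hx
  by_contra hx0
  exact hx (by simp only [gammaPDFReal, if_neg (show ¬ 0 ≤ x from hx0), zero_mul])

lemma ae_pos_gammaMeasure : ∀ᵐ x ∂gammaMeasure a b, 0 < x := by
  rw [ae_iff]
  simp only [not_lt]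
  change gammaMeasure a b (Iic 0) = 0
  rw [gammaMeasure, withDensity_apply _ measurableSet_Iic,
    setLIntegral_congr Iio_ae_eq_Iic.symm]
  exact lintegral_gammaPDF_of_nonpos le_rfl

lemma mul_gammaPDFReal_of_pos {x : ℝ} (hx : 0 < x) :
    x * gammaPDFReal a b x = b ^ a / Gamma a * (x ^ a * exp (-b * x)) := by
  rw [gammaPDFReal, if_pos hx.le, rpow_sub_one hx.ne']
  field_simp

lemma integrable_id_gammaMeasure (ha : 0 < a) (hb : 0 < b) :
    Integrable (fun x ↦ x) (gammaMeasure a b) := by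
  rw [integrable_gammaMeasure_iff ha hb]
  have h := (integrableOn_rpow_mul_exp_neg_mul_rpow (s := a) (by linarith) one_pos hb).const_mul
    (b ^ a / Gamma a)
  refine IntegrableOn.congr_fun h (fun x (hx : 0 < x) ↦ ?_) measurableSet_Ioi
  rw [mul_comm (gammaPDFReal a b x), mul_gammaPDFReal_of_pos hx, rpow_one]

lemma hasDerivAt_mul_gammaPDFReal {x : ℝ} (hx : 0 < x) :
    HasDerivAt (fun y ↦ y * gammaPDFReal a b y) ((a - b * x) * gammaPDFReal a b x) x := by
  have hxa : HasDerivAt (fun y ↦ b ^ a / Gamma a * (y ^ a * exp (-b * y)))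
      (b ^ a / Gamma a * (a * x ^ (a - 1) * exp (-b * x) + x ^ a * (exp (-b * x) * -b))) x :=
    ((hasDerivAt_rpow_const (Or.inl hx.ne')).mul
      (((hasDerivAt_id x).const_mul (-b)).exp.congr_deriv (by simp))).const_mul _
  refine (hxa.congr_of_eventuallyEq ?_).congr_deriv ?_
  · filter_upwards [Ioi_mem_nhds hx] with y hy using mul_gammaPDFReal_of_pos hy
  · rw [gammaPDFReal, if_pos hx.le, rpow_sub_one hx.ne']
    field_simp
    ring

lemma tendsto_mul_gammaPDFReal_nhdsGT_zero (ha : 0 < a) :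
    Tendsto (fun x ↦ x * gammaPDFReal a b x) (𝓝[>] 0) (𝓝 0) := by
  have hcont : ContinuousAt (fun x ↦ b ^ a / Gamma a * (x ^ a * exp (-b * x))) 0 :=
    continuousAt_const.mul ((continuousAt_rpow_const 0 a (Or.inr ha.le)).mul (by fun_prop))
  have h0 := hcont.tendsto.mono_left (nhdsWithin_le_nhds (s := Ioi 0))
  rw [zero_rpow ha.ne', zero_mul, mul_zero] at h0
  exact h0.congr' (eventually_nhdsWithin_of_forall fun x hx ↦ (mul_gammaPDFReal_of_pos hx).symm)

lemma tendsto_mul_gammaPDFReal_atTop (hb : 0 < b) :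
    Tendsto (fun x ↦ x * gammaPDFReal a b x) atTop (𝓝 0) := by
  have h := (tendsto_rpow_mul_exp_neg_mul_atTop_nhds_zero a b hb).const_mul (b ^ a / Gamma a)
  rw [mul_zero] at h
  exact h.congr' (eventually_gt_atTop 0 |>.mono fun x hx ↦ (mul_gammaPDFReal_of_pos hx).symm)

theorem integral_mul_gammaMeasure (ha : 0 < a) (hb : 0 < b) {h h' : ℝ → ℝ} (hc : Continuous h)
    (hd : ∀ x ∈ Ioi 0, HasDerivAt h (h' x) x) {C : ℝ} (hC : ∀ x, |h x| ≤ C)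
    (hint : Integrable (fun x ↦ x * h' x) (gammaMeasure a b)) :
    b * ∫ x, x * h x ∂gammaMeasure a b = ∫ x, (x * h' x + a * h x) ∂gammaMeasure a b := by
  have := isProbabilityMeasure_gammaMeasure ha hb
  have hbdd : ∀ᵐ x ∂gammaMeasure a b, ‖h x‖ ≤ C := ae_of_all _ hC
  have hh : Integrable h (gammaMeasure a b) := .of_bound hc.aestronglyMeasurable C hbdd
  have hxh : Integrable (fun x ↦ x * h x) (gammaMeasure a b) :=
    (integrable_id_gammaMeasure ha hb).mul_bdd hc.aestronglyMeasurable hbdd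
  have hlin : Integrable (fun x ↦ (a - b * x) * h x) (gammaMeasure a b) :=
    ((integrable_const a).sub ((integrable_id_gammaMeasure ha hb).const_mul b)).mul_bdd
      hc.aestronglyMeasurable hbdd
  have hbddU : ∀ l : Filter ℝ, IsBoundedUnder (· ≤ ·) l (norm ∘ h) := fun l ↦
    isBoundedUnder_of ⟨C, hC⟩
  have ibp : ∫ x, (a - b * x) * h x ∂gammaMeasure a b = -∫ x, x * h' x ∂gammaMeasure a b := by
    rw [integrable_gammaMeasure_iff ha hb] at hint hlin
    simp only [integral_gammaMeasure_eq_setIntegral ha hb]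
    have hparts := integral_Ioi_mul_deriv_eq_deriv_mul hd
      (fun x hx ↦ hasDerivAt_mul_gammaPDFReal (a := a) (b := b) hx)
      (hlin.congr_fun (fun x _ ↦ by simp only [Pi.mul_apply]; ring) measurableSet_Ioi)
      (hint.congr_fun (fun x _ ↦ by simp only [Pi.mul_apply]; ring) measurableSet_Ioi)
      (by simpa only [Pi.mul_def, mul_comm (h _)] using
        (tendsto_mul_gammaPDFReal_nhdsGT_zero ha).zero_mul_isBoundedUnder_le (hbddU _))
      (by simpa only [Pi.mul_def, mul_comm (h _)] using
        (tendsto_mul_gammaPDFReal_atTop hb).zero_mul_isBoundedUnder_le (hbddU _))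
    calc ∫ x in Ioi 0, gammaPDFReal a b x * ((a - b * x) * h x)
        = ∫ x in Ioi 0, h x * ((a - b * x) * gammaPDFReal a b x) := by congr 1 with x; ring
      _ = 0 - 0 - ∫ x in Ioi 0, h' x * (x * gammaPDFReal a b x) := hparts
      _ = -∫ x in Ioi 0, gammaPDFReal a b x * (x * h' x) := by
        rw [sub_self, zero_sub]; congr 2 with x; ring
  have hsplit : ∫ x, (a - b * x) * h x ∂gammaMeasure a b
      = a * ∫ x, h x ∂gammaMeasure a b - b * ∫ x, x * h x ∂gammaMeasure a b := by
    rw [← integral_const_mul, ← integral_const_mul, ← integral_sub (hh.const_mul a)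
      (hxh.const_mul b)]
    congr 1 with x
    ring
  rw [integral_add hint (hh.const_mul a), integral_const_mul, ← neg_neg (∫ x, x * h' x ∂_), ← ibp,
    hsplit]
  ring

lemma integrable_one_add_abs_gammaMeasure (ha : 0 < a) (hb : 0 < b) :
    Integrable (fun x ↦ 1 + |x|) (gammaMeasure a b) :=
  have := isProbabilityMeasure_gammaMeasure ha hb
  (integrable_const 1).add (integrable_id_gammaMeasure ha hb).abs

lemma integral_mul_comp_sqrt_gammaMeasure {r : ℝ} (hr : 0 < r) (c : ℝ) {g : ℝ → ℝ}
    (hg : Differentiable ℝ g) {C C' : ℝ} (hgC : ∀ x, |g x| ≤ C) (hg'C : ∀ x, |deriv g x| ≤ C') :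
    ∫ x, x * g (c * √x) ∂gammaMeasure (r / 2) (1 / 2) =
      ∫ x, (c * √x * deriv g (c * √x) + r * g (c * √x)) ∂gammaMeasure (r / 2) (1 / 2) := by
  have := isProbabilityMeasure_gammaMeasure (half_pos hr) one_half_pos
  have hd (x : ℝ) (hx : x ∈ Ioi 0) : HasDerivAt (fun x ↦ g (c * √x))
      (deriv g (c * √x) * (c * (1 / (2 * √x)))) x :=
    (hg _).hasDerivAt.comp x ((hasDerivAt_sqrt (ne_of_gt hx)).const_mul c)
  -- `x / √x = √x` holds for every real `x` (both sides vanish for `x ≤ 0`).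
  have hxh' (x : ℝ) : x * (deriv g (c * √x) * (c * (1 / (2 * √x))))
      = c * √x * deriv g (c * √x) / 2 := by
    calc _ = c * deriv g (c * √x) * (x / √x) / 2 := by ring
      _ = _ := by rw [div_sqrt]; ring
  have hint : Integrable (fun x ↦ c * √x * deriv g (c * √x) / 2)
      (gammaMeasure (r / 2) (1 / 2)) := by
    refine ((integrable_one_add_abs_gammaMeasure (half_pos hr) one_half_pos).const_mul
      (|c| * C' / 2)).mono' (by fun_prop) (ae_of_all _ fun x ↦ ?_)
    rw [norm_eq_abs, abs_div, abs_mul, abs_mul, abs_of_nonneg (sqrt_nonneg x), abs_two]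
    have : 0 ≤ C' := (abs_nonneg _).trans (hg'C 0)
    calc |c| * √x * |deriv g (c * √x)| / 2 ≤ |c| * (1 + |x|) * C' / 2 := by
          gcongr
          exacts [sqrt_le_one_add_abs x, hg'C _]
      _ = _ := by ring
  have stein := integral_mul_gammaMeasure (h := fun x ↦ g (c * √x)) (half_pos hr) one_half_pos
    (hg.continuous.comp (continuous_const.mul continuous_sqrt)) hd (fun x ↦ hgC _)
    (hint.congr (ae_of_all _ fun x ↦ (hxh' x).symm))
  simp only [hxh'] at stein
  calc ∫ x, x * g (c * √x) ∂gammaMeasure (r / 2) (1 / 2)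
      = 2 * (1 / 2 * ∫ x, x * g (c * √x) ∂gammaMeasure (r / 2) (1 / 2)) := by ring
    _ = _ := by
      rw [stein, ← integral_const_mul]
      congr 1 with x
      ring

end Gamma

theorem stein_identity_svg_prod (r σ : ℝ) (hr : 0 < r) {f : ℝ → ℝ} (hf : Differentiable ℝ f)
    (hf' : Differentiable ℝ (deriv f)) {C₀ C₁ C₂ : ℝ} (h₀ : ∀ x, |f x| ≤ C₀)
    (h₁ : ∀ x, |deriv f x| ≤ C₁) (h₂ : ∀ x, |deriv (deriv f) x| ≤ C₂) :
    ∫ p, σ * √p.1 * p.2 * f (σ * √p.1 * p.2)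
        ∂(gammaMeasure (r / 2) (1 / 2)).prod (gaussianReal 0 1) =
      σ ^ 2 * ∫ p, (σ * √p.1 * p.2 * deriv (deriv f) (σ * √p.1 * p.2)
          + r * deriv f (σ * √p.1 * p.2))
        ∂(gammaMeasure (r / 2) (1 / 2)).prod (gaussianReal 0 1) := by
  set γ := gammaMeasure (r / 2) (1 / 2)
  set N := gaussianReal 0 1
  have := isProbabilityMeasure_gammaMeasure (half_pos hr) one_half_pos
  have hfm : Measurable f := hf.continuous.measurable
  have hC₁ : 0 ≤ C₁ := (abs_nonneg _).trans (h₁ 0)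
  set W : ℝ × ℝ → ℝ := fun p ↦ (1 + |p.1|) * (1 + |p.2|)
  have hW : Integrable W (γ.prod N) :=
    (integrable_one_add_abs_gammaMeasure (half_pos hr) one_half_pos).mul_prod
      (integrable_one_add_abs_gaussianReal 0 1)
  have hW1 (p : ℝ × ℝ) : 1 ≤ W p := by
    nlinarith [abs_nonneg p.1, abs_nonneg p.2]
  have hWfst (p : ℝ × ℝ) : |p.1| ≤ W p := by
    nlinarith [abs_nonneg p.1, abs_nonneg p.2]
  have hZ (p : ℝ × ℝ) : |σ * √p.1 * p.2| ≤ |σ| * W p := abs_mul_sqrt_mul_le σ p.1 p.2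
  have hint₁ : Integrable (fun p : ℝ × ℝ ↦ σ * √p.1 * p.2 * f (σ * √p.1 * p.2)) (γ.prod N) := by
    refine (hW.const_mul (|σ| * C₀)).mono' (by fun_prop) (ae_of_all _ fun p ↦ ?_)
    rw [norm_eq_abs, abs_mul]
    calc _ ≤ |σ| * W p * C₀ := mul_le_mul (hZ p) (h₀ _) (abs_nonneg _) (by positivity)
      _ = _ := by ring
  have hint₂ : Integrable (fun p : ℝ × ℝ ↦ p.1 * deriv f (σ * √p.1 * p.2)) (γ.prod N) := by
    refine (hW.const_mul C₁).mono' (by fun_prop) (ae_of_all _ fun p ↦ ?_)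
    rw [norm_eq_abs, abs_mul, mul_comm C₁]
    exact mul_le_mul (hWfst p) (h₁ _) (abs_nonneg _) (by linarith [hW1 p])
  have hint₃ : Integrable (fun p : ℝ × ℝ ↦ σ * √p.1 * p.2 * deriv (deriv f) (σ * √p.1 * p.2)
      + r * deriv f (σ * √p.1 * p.2)) (γ.prod N) := by
    refine (hW.const_mul (|σ| * C₂ + r * C₁)).mono' (by fun_prop) (ae_of_all _ fun p ↦ ?_)
    rw [norm_eq_abs]
    refine (abs_add_le _ _).trans ?_
    rw [abs_mul (σ * √p.1 * p.2), abs_mul r, abs_of_pos hr]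
    have := mul_le_mul (hZ p) (h₂ (σ * √p.1 * p.2)) (abs_nonneg _) (by positivity)
    nlinarith [mul_le_mul_of_nonneg_left (h₁ (σ * √p.1 * p.2)) hr.le,
      mul_le_mul_of_nonneg_left (hW1 p) (mul_nonneg hr.le hC₁)]
  have gaussian_step : ∀ᵐ x ∂γ, ∫ y, σ * √x * y * f (σ * √x * y) ∂N
      = σ ^ 2 * ∫ y, x * deriv f (σ * √x * y) ∂N := by
    filter_upwards [ae_pos_gammaMeasure] with x hx
    rw [integral_mul_comp_mul_gaussianReal _ hf h₀ h₁, integral_const_mul, mul_pow,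
      sq_sqrt hx.le, mul_assoc]
  have gamma_step (y : ℝ) : ∫ x, x * deriv f (σ * √x * y) ∂γ
      = ∫ x, (σ * √x * y * deriv (deriv f) (σ * √x * y) + r * deriv f (σ * √x * y)) ∂γ := by
    simp only [mul_right_comm σ _ y]
    exact integral_mul_comp_sqrt_gammaMeasure hr (σ * y) hf' h₁ h₂
  calc _ = ∫ x, ∫ y, σ * √x * y * f (σ * √x * y) ∂N ∂γ := integral_prod _ hint₁
    _ = σ ^ 2 * ∫ x, ∫ y, x * deriv f (σ * √x * y) ∂N ∂γ := by
      rw [← integral_const_mul]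
      exact integral_congr_ae gaussian_step
    _ = σ ^ 2 * ∫ y, ∫ x, x * deriv f (σ * √x * y) ∂γ ∂N := by
      rw [integral_integral_swap hint₂]
    _ = _ := by
      simp only [gamma_step]
      rw [integral_prod_symm _ hint₃]

end ProbabilityTheory

theorem svg_fixed_point_centered_equilibrium_general
    {Ω : Type*} [MeasureSpace Ω] [IsProbabilityMeasure (ℙ : Measure Ω)]
    (r σ : ℝ) (hr : 0 < r)
    (X Y : Ω → ℝ)
    (hX : Measure.map X ℙ = gammaMeasure (r / 2) (1 / 2))
    (hY : Measure.map Y ℙ = gaussianReal 0 1)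
    (hXY : IndepFun X Y ℙ)
    (Z : Ω → ℝ) (hZ : ∀ ω, Z ω = σ * Real.sqrt (X ω) * Y ω) :
    ∀ f : ℝ → ℝ, ContDiff ℝ 2 f →
      (∃ C, ∀ x, |f x| ≤ C) → (∃ C, ∀ x, |deriv f x| ≤ C) →
      (∃ C, ∀ x, |deriv (deriv f) x| ≤ C) →
      ∫ ω, Z ω * f (Z ω) ∂ℙ =
        σ ^ 2 * ∫ ω, (Z ω * deriv (deriv f) (Z ω) + r * deriv f (Z ω)) ∂ℙ := by
  rintro f hf ⟨C₀, h₀⟩ ⟨C₁, h₁⟩ ⟨C₂, h₂⟩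
  have := isProbabilityMeasure_gammaMeasure (half_pos hr) one_half_pos
  have hXlaw : HasLaw X (gammaMeasure (r / 2) (1 / 2)) :=
    ⟨aemeasurable_of_map_neZero (by rw [hX]; infer_instance), hX⟩
  have hYlaw : HasLaw Y (gaussianReal 0 1) :=
    ⟨aemeasurable_of_map_neZero (by rw [hY]; infer_instance), hY⟩
  have hlaw := IndepFun.hasLaw_prod hXlaw hYlaw hXY
  have hfc : Continuous f := hf.continuous
  have hlhs := hlaw.integral_comp (f := fun p ↦ σ * √p.1 * p.2 * f (σ * √p.1 * p.2)) (by fun_prop)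
  have hrhs := hlaw.integral_comp (f := fun p ↦ σ * √p.1 * p.2 * deriv (deriv f) (σ * √p.1 * p.2)
    + r * deriv f (σ * √p.1 * p.2)) (by fun_prop)
  simp only [Function.comp_def] at hlhs hrhs
  simp only [hZ, hlhs, hrhs]
  exact stein_identity_svg_prod r σ hr (hf.differentiable (by norm_num)) hf.differentiable_deriv_two
    h₀ h₁ h₂

/-- The `SVG(r,σ,0)` distribution (the law of `σ√X·Y`, `X ~ Γ(r/2,1/2)`,
`Y ~ N(0,1)` independent) is a fixed point of the centered equilibrium
transformation of order `r`: `E[Z f(Z)] = σ² E[Z f''(Z) + r f'(Z)]` for all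
twice-differentiable `f` with `f, f', f''` bounded. -/
theorem svg_fixed_point_centered_equilibrium
    {Ω : Type*} [MeasureSpace Ω] [IsProbabilityMeasure (ℙ : Measure Ω)]
    (r σ : ℝ) (hr : 0 < r) (hσ : 0 < σ)
    (X Y : Ω → ℝ)
    (hX : Measure.map X ℙ = gammaMeasure (r / 2) (1 / 2))
    (hY : Measure.map Y ℙ = gaussianReal 0 1)
    (hXY : IndepFun X Y ℙ)
    (Z : Ω → ℝ) (hZ : ∀ ω, Z ω = σ * Real.sqrt (X ω) * Y ω) :
    ∀ f : ℝ → ℝ, ContDiff ℝ 2 f →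
      (∃ C, ∀ x, |f x| ≤ C) → (∃ C, ∀ x, |deriv f x| ≤ C) →
      (∃ C, ∀ x, |deriv (deriv f) x| ≤ C) →
      ∫ ω, Z ω * f (Z ω) ∂ℙ =
        σ ^ 2 * ∫ ω, (Z ω * deriv (deriv f) (Z ω) + r * deriv f (Z ω)) ∂ℙ :=
  svg_fixed_point_centered_equilibrium_general r σ hr X Y hX hY hXY Z hZ
end

section
/- For 0 < x < 0.729, K_0(x) < -2 log x, where K_0 is the modified Bessel function of the second kind of order 0. -/
/-!
By Fubini, `K₀(x) - K₀(y) = ∫ₓʸ K₁(s) ds` with `K₁(s) ≤ ∫₀^∞ cosh t e^{-s sinh t} dt = 1/s`, so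
`K₀ + log` is nondecreasing on `(0, ∞)` and `-2 log x - K₀(x)` is decreasing. It therefore suffices
to show `K₀(0.729) < -2 log 0.729 ≈ 0.63216`. The left side (`≈ 0.63095`) is bounded by a
certified quadrature: on each cell `cosh` lies above its tangent at the midpoint, so the integrand
is bounded by the exponential of an affine function, whose integral is evaluated with rational
enclosures of `exp` computed by the kernel.
-/

open Real

/-- The modified Bessel function of the second kind of order `0`,
`K_0(x) = ∫₀^∞ e^{-x cosh t} dt`. -/
noncomputable def besselK0 (x : ℝ) : ℝ :=
  ∫ t in Set.Ioi (0 : ℝ), Real.exp (-x * Real.cosh t)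

open MeasureTheory Set Filter Topology intervalIntegral

lemma cosh_add_sinh_mul_sub_le_cosh (m t : ℝ) : cosh m + sinh m * (t - m) ≤ cosh t := by
  have hsplit : cosh t = cosh m * cosh (t - m) + sinh m * sinh (t - m) := by
    rw [← cosh_add, add_sub_cancel]
  have hA : 0 ≤ exp (t - m) - 1 - (t - m) := by linarith [add_one_le_exp (t - m)]
  have hB : 0 ≤ exp (-(t - m)) - 1 + (t - m) := by linarith [add_one_le_exp (-(t - m))]
  rw [hsplit, cosh_eq, sinh_eq, cosh_eq (t - m), sinh_eq (t - m)]
  nlinarith [mul_nonneg (exp_pos m).le hA, mul_nonneg (exp_pos (-m)).le hB]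

lemma exp_neg_mul_cosh_le_exp_neg_mul_sinh {x : ℝ} (hx : 0 ≤ x) (t : ℝ) :
    exp (-x * cosh t) ≤ exp (-x * sinh t) :=
  exp_le_exp.2 (by nlinarith [mul_le_mul_of_nonneg_left (sinh_lt_cosh t).le hx])

lemma exp_neg_mul_cosh_le_cosh_mul_exp_neg_mul_sinh {x : ℝ} (hx : 0 ≤ x) (t : ℝ) :
    exp (-x * cosh t) ≤ cosh t * exp (-x * sinh t) :=
  (exp_neg_mul_cosh_le_exp_neg_mul_sinh hx t).trans
    (le_mul_of_one_le_left (exp_pos _).le (one_le_cosh t))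

lemma tendsto_neg_exp_neg_mul_sinh_div_atTop {x : ℝ} (hx : 0 < x) :
    Tendsto (fun u => -exp (-x * sinh u) / x) atTop (𝓝 0) := by
  have hsinh : Tendsto sinh atTop atTop :=
    tendsto_atTop_mono' _ (eventually_ge_atTop 0 |>.mono fun _ hu => self_le_sinh_iff.2 hu)
      tendsto_id
  have hexp : Tendsto (fun u => exp (-x * sinh u)) atTop (𝓝 0) := by
    refine tendsto_exp_atBot.comp ?_
    simpa only [neg_mul, Function.comp_def] using
      tendsto_neg_atTop_atBot.comp (hsinh.const_mul_atTop hx)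
  simpa using hexp.neg.div_const x

lemma hasDerivAt_neg_exp_neg_mul_sinh_div {x : ℝ} (hx : x ≠ 0) (t : ℝ) :
    HasDerivAt (fun u => -exp (-x * sinh u) / x) (cosh t * exp (-x * sinh t)) t := by
  refine (((hasDerivAt_sinh t).const_mul (-x)).exp.neg.div_const x).congr_deriv ?_
  field_simp

lemma integrableOn_cosh_mul_exp_neg_mul_sinh {x : ℝ} (hx : 0 < x) (a : ℝ) :
    IntegrableOn (fun t => cosh t * exp (-x * sinh t)) (Ioi a) :=
  integrableOn_Ioi_deriv_of_nonneg' (fun t _ => hasDerivAt_neg_exp_neg_mul_sinh_div hx.ne' t)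
    (fun t _ => by positivity) (tendsto_neg_exp_neg_mul_sinh_div_atTop hx)

lemma integral_cosh_mul_exp_neg_mul_sinh {x : ℝ} (hx : 0 < x) (a : ℝ) :
    ∫ t in Ioi a, cosh t * exp (-x * sinh t) = exp (-x * sinh a) / x := by
  rw [integral_Ioi_of_hasDerivAt_of_tendsto'
    (fun t _ => hasDerivAt_neg_exp_neg_mul_sinh_div hx.ne' t)
    (integrableOn_cosh_mul_exp_neg_mul_sinh hx a) (tendsto_neg_exp_neg_mul_sinh_div_atTop hx)]
  ring

lemma integrableOn_exp_neg_mul_cosh {x : ℝ} (hx : 0 < x) (a : ℝ) :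
    IntegrableOn (fun t => exp (-x * cosh t)) (Ioi a) := by
  refine (integrableOn_cosh_mul_exp_neg_mul_sinh hx a).mono' (by fun_prop)
    (ae_of_all _ fun t => ?_)
  rw [norm_of_nonneg (exp_pos _).le]
  exact exp_neg_mul_cosh_le_cosh_mul_exp_neg_mul_sinh hx.le t

lemma integral_exp_neg_mul_cosh_le {x : ℝ} (hx : 0 < x) (a : ℝ) :
    ∫ t in Ioi a, exp (-x * cosh t) ≤ exp (-x * sinh a) / x :=
  integral_cosh_mul_exp_neg_mul_sinh hx a ▸ setIntegral_mono (integrableOn_exp_neg_mul_cosh hx a)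
    (integrableOn_cosh_mul_exp_neg_mul_sinh hx a)
    (exp_neg_mul_cosh_le_cosh_mul_exp_neg_mul_sinh hx.le)

lemma intervalIntegral_exp_neg_mul_cosh_le {x a b : ℝ} (hx : 0 ≤ x) (hab : a ≤ b) :
    ∫ t in a..b, exp (-x * cosh t) ≤
      (b - a) * exp (-x * cosh ((a + b) / 2)) * cosh (x * sinh ((a + b) / 2) * ((b - a) / 2)) := by
  rcases hab.eq_or_lt with rfl | hab
  · simp
  set m := (a + b) / 2
  set h := (b - a) / 2
  set w := x * sinh m * h
  set c := exp (-x * cosh m)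
  have hh : 0 < h := by simp only [h]; linarith
  -- `cosh` lies above its tangent at `m` and `exp` below its chord over `[-w, w]`
  have hpointwise : ∀ t ∈ Icc a b, exp (-x * cosh t) ≤ c * cosh w + c * sinh w / h * (m - t) := by
    intro t ht
    have hst : |(m - t) / h| ≤ 1 := by
      rw [abs_div, abs_of_pos hh, div_le_one hh, abs_le]
      constructor <;> simp only [m, h] <;> linarith [ht.1, ht.2]
    calc exp (-x * cosh t) ≤ exp (-x * cosh m + (m - t) / h * w) := by
          gcongr
          have : (m - t) / h * w = -x * sinh m * (t - m) := by simp only [w]; field_simp; ring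
          rw [this]
          nlinarith [cosh_add_sinh_mul_sub_le_cosh m t]
      _ ≤ c * (cosh w + (m - t) / h * sinh w) := by
          rw [exp_add]; gcongr; exact exp_mul_le_cosh_add_mul_sinh hst w
      _ = _ := by ring
  have hlin : ∫ t in a..b, (m - t) = 0 := by
    rw [intervalIntegral.integral_comp_sub_left (fun t => t), integral_id]
    ring
  calc ∫ t in a..b, exp (-x * cosh t)
      ≤ ∫ t in a..b, (c * cosh w + c * sinh w / h * (m - t)) :=
        integral_mono_on hab.le (Continuous.intervalIntegrable (by fun_prop) _ _)
          (Continuous.intervalIntegrable (by fun_prop) _ _) hpointwise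
    _ = (b - a) * c * cosh w := by
        rw [intervalIntegral.integral_add intervalIntegrable_const
          (Continuous.intervalIntegrable (by fun_prop) _ _),
          intervalIntegral.integral_const_mul (c * sinh w / h),
          hlin, intervalIntegral.integral_const, smul_eq_mul]
        ring

noncomputable def besselK1 (x : ℝ) : ℝ :=
  ∫ t in Ioi (0 : ℝ), cosh t * exp (-x * cosh t)

lemma integrableOn_cosh_mul_exp_neg_mul_cosh {x : ℝ} (hx : 0 < x) (a : ℝ) :
    IntegrableOn (fun t => cosh t * exp (-x * cosh t)) (Ioi a) := by
  refine (integrableOn_cosh_mul_exp_neg_mul_sinh hx a).mono' (by fun_prop)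
    (ae_of_all _ fun t => ?_)
  rw [norm_of_nonneg (by positivity)]
  exact mul_le_mul_of_nonneg_left (exp_neg_mul_cosh_le_exp_neg_mul_sinh hx.le t) (cosh_pos t).le

lemma besselK1_le_inv {x : ℝ} (hx : 0 < x) : besselK1 x ≤ x⁻¹ := by
  calc besselK1 x ≤ ∫ t in Ioi (0 : ℝ), cosh t * exp (-x * sinh t) :=
        setIntegral_mono (integrableOn_cosh_mul_exp_neg_mul_cosh hx 0)
          (integrableOn_cosh_mul_exp_neg_mul_sinh hx 0) fun t =>
            mul_le_mul_of_nonneg_left (exp_neg_mul_cosh_le_exp_neg_mul_sinh hx.le t) (cosh_pos t).le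
    _ = x⁻¹ := by rw [integral_cosh_mul_exp_neg_mul_sinh hx, sinh_zero]; simp

lemma integrable_cosh_mul_exp_neg_mul_cosh_prod {x : ℝ} (hx : 0 < x) (y : ℝ) :
    Integrable (Function.uncurry fun s t => cosh t * exp (-s * cosh t))
      ((volume.restrict (Ioc x y)).prod (volume.restrict (Ioi 0))) := by
  have hmeas : AEStronglyMeasurable (Function.uncurry fun s t : ℝ => cosh t * exp (-s * cosh t))
      ((volume.restrict (Ioc x y)).prod (volume.restrict (Ioi 0))) :=
    (by fun_prop : Continuous fun p : ℝ × ℝ => cosh p.2 * exp (-p.1 * cosh p.2))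
      |>.aestronglyMeasurable
  refine (integrable_prod_iff hmeas).2 ⟨?_, ?_⟩
  · filter_upwards [ae_restrict_mem measurableSet_Ioc] with s hs
    exact integrableOn_cosh_mul_exp_neg_mul_cosh (hx.trans hs.1) 0
  · refine Integrable.mono' (integrable_const x⁻¹) hmeas.norm.integral_prod_right' ?_
    filter_upwards [ae_restrict_mem measurableSet_Ioc] with s hs
    have hs0 : 0 < s := hx.trans hs.1
    have hnorm : (fun t => ‖cosh t * exp (-s * cosh t)‖) = fun t => cosh t * exp (-s * cosh t) :=
      funext fun t => norm_of_nonneg (by positivity)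
    simp only [Function.uncurry_apply_pair, hnorm]
    rw [norm_of_nonneg (setIntegral_nonneg measurableSet_Ioi fun t _ => by positivity)]
    exact (besselK1_le_inv hs0).trans (inv_anti₀ hx hs.1.le)

lemma integral_Ioc_besselK1 {x y : ℝ} (hx : 0 < x) (hxy : x ≤ y) :
    ∫ s in Ioc x y, besselK1 s = besselK0 x - besselK0 y := by
  have hinner : ∀ t, ∫ s in Ioc x y, cosh t * exp (-s * cosh t) =
      exp (-x * cosh t) - exp (-y * cosh t) := by
    intro t
    rw [← integral_of_le hxy, integral_eq_sub_of_hasDerivAt (f := fun s => -exp (-s * cosh t))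
      (fun s _ => ?_) (Continuous.intervalIntegrable (by fun_prop) _ _)]
    · ring
    · refine (((hasDerivAt_neg s).mul_const (cosh t)).exp.neg).congr_deriv ?_
      ring
  unfold besselK1 besselK0
  rw [integral_integral_swap (integrable_cosh_mul_exp_neg_mul_cosh_prod hx y), ← integral_sub
    (integrableOn_exp_neg_mul_cosh hx 0) (integrableOn_exp_neg_mul_cosh (hx.trans_le hxy) 0)]
  simp_rw [hinner]

lemma besselK0_add_log_monotoneOn : MonotoneOn (fun x => besselK0 x + log x) (Ioi 0) := by
  intro x (hx : 0 < x) y _ hxy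
  have hK1 : ∫ s in Ioc x y, besselK1 s ≤ ∫ s in Ioc x y, s⁻¹ :=
    setIntegral_mono_on (integrable_cosh_mul_exp_neg_mul_cosh_prod hx y).integral_prod_left
      ((continuousOn_inv₀.mono fun s hs => (hx.trans_le hs.1).ne').integrableOn_Icc.mono_set
        Ioc_subset_Icc_self) measurableSet_Ioc fun s hs => besselK1_le_inv (hx.trans hs.1)
  rw [integral_Ioc_besselK1 hx hxy, ← integral_of_le hxy,
    integral_inv_of_pos hx (hx.trans_le hxy), log_div (hx.trans_le hxy).ne' hx.ne'] at hK1
  simp only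
  linarith

namespace RatBounds

open Finset

/-- Rounding to the grid `2⁻⁴⁸` keeps the rationals small when the kernel evaluates the bounds. -/
def roundUp (q : ℚ) : ℚ := ⌈q * 2 ^ 48⌉ / 2 ^ 48

def roundDown (q : ℚ) : ℚ := ⌊q * 2 ^ 48⌋ / 2 ^ 48

lemma le_roundUp (q : ℚ) : q ≤ roundUp q := by
  rw [roundUp, le_div_iff₀ (by positivity)]
  exact Int.le_ceil _

lemma roundDown_le (q : ℚ) : roundDown q ≤ q := by
  rw [roundDown, div_le_iff₀ (by positivity)]
  exact Int.floor_le _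

lemma one_le_roundDown {q : ℚ} (hq : 1 ≤ q) : 1 ≤ roundDown q := by
  rw [roundDown, le_div_iff₀ (by positivity), one_mul]
  exact_mod_cast Int.le_floor.2 (by push_cast; nlinarith)

def expTaylor (n : ℕ) (r : ℚ) : ℚ := ∑ i ∈ range n, r ^ i / i.factorial

lemma cast_expTaylor (n : ℕ) (r : ℚ) :
    (expTaylor n r : ℝ) = ∑ i ∈ range n, (r : ℝ) ^ i / i.factorial := by
  push_cast [expTaylor]; rfl

lemma one_le_expTaylor {r : ℚ} (hr : 0 ≤ r) (n : ℕ) : 1 ≤ expTaylor (n + 1) r := by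
  rw [expTaylor, sum_range_succ']
  simp only [pow_zero, Nat.factorial_zero, Nat.cast_one, div_one, le_add_iff_nonneg_left]
  exact sum_nonneg fun i _ => by positivity

def squareUp : ℕ → ℚ → ℚ
  | 0, q => q
  | j + 1, q => squareUp j (roundUp (q * q))

def squareDown : ℕ → ℚ → ℚ
  | 0, q => q
  | j + 1, q => squareDown j (roundDown (q * q))

lemma exp_le_squareUp {s : ℝ} {q : ℚ} (h : exp s ≤ q) (j : ℕ) :
    exp (2 ^ j * s) ≤ squareUp j q := by
  induction j generalizing s q with
  | zero => simpa [squareUp] using h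
  | succ j ih =>
    have hsq : exp (2 * s) ≤ (roundUp (q * q) : ℚ) := by
      calc exp (2 * s) = exp s * exp s := by rw [two_mul, exp_add]
        _ ≤ q * q := mul_le_mul h h (exp_pos s).le ((exp_pos s).le.trans h)
        _ ≤ _ := by exact_mod_cast le_roundUp _
    simpa only [squareUp, pow_succ, mul_assoc] using ih hsq

lemma squareDown_le_exp {s : ℝ} {q : ℚ} (h1 : 1 ≤ q) (h : q ≤ exp s) (j : ℕ) :
    1 ≤ squareDown j q ∧ squareDown j q ≤ exp (2 ^ j * s) := by
  induction j generalizing s q with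
  | zero => simpa [squareDown] using ⟨h1, h⟩
  | succ j ih =>
    have hq : (0 : ℝ) ≤ q := by exact_mod_cast zero_le_one.trans h1
    have hsq : (roundDown (q * q) : ℝ) ≤ exp (2 * s) := by
      calc (roundDown (q * q) : ℝ) ≤ q * q := by exact_mod_cast roundDown_le _
        _ ≤ exp s * exp s := mul_le_mul h h hq (hq.trans h)
        _ = exp (2 * s) := by rw [two_mul, exp_add]
    simpa only [squareDown, pow_succ, mul_assoc] using
      ih (one_le_roundDown (one_le_mul_of_one_le_of_one_le h1 h1)) hsq

def expUpperSmall (s : ℚ) : ℚ :=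
  roundUp (expTaylor 12 s + s ^ 12 * 13 / ((Nat.factorial 12 : ℚ) * 12))

def expLowerSmall (s : ℚ) : ℚ := roundDown (expTaylor 12 s)

lemma exp_le_expUpperSmall {s : ℚ} (hs0 : 0 ≤ s) (hs1 : s ≤ 1) : exp s ≤ expUpperSmall s := by
  refine (exp_bound' (by exact_mod_cast hs0) (by exact_mod_cast hs1) (n := 12)
    (by norm_num)).trans ?_
  calc _ = ((expTaylor 12 s + s ^ 12 * 13 / ((Nat.factorial 12 : ℚ) * 12) : ℚ) : ℝ) := by
        push_cast [cast_expTaylor]; ring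
    _ ≤ _ := Rat.cast_le.2 (le_roundUp _)

lemma expLowerSmall_le_exp {s : ℚ} (hs : 0 ≤ s) :
    1 ≤ expLowerSmall s ∧ expLowerSmall s ≤ exp s := by
  refine ⟨one_le_roundDown (one_le_expTaylor hs 11), ?_⟩
  calc ((expLowerSmall s : ℚ) : ℝ) ≤ expTaylor 12 s := by exact_mod_cast roundDown_le _
    _ ≤ exp s := by rw [cast_expTaylor]; exact sum_le_exp_of_nonneg (by exact_mod_cast hs) 12

/-- Argument reduction: `exp r = exp (r / 2 ^ j) ^ (2 ^ j)` with `j = ⌈r⌉₊`, so that the Taylor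
polynomial is only evaluated on `[0, 1/2]`. -/
def expUpperNonneg (r : ℚ) : ℚ := squareUp ⌈r⌉₊ (expUpperSmall (r / 2 ^ ⌈r⌉₊))

def expLowerNonneg (r : ℚ) : ℚ := squareDown ⌈r⌉₊ (expLowerSmall (r / 2 ^ ⌈r⌉₊))

lemma div_two_pow_ceil_le_one (r : ℚ) : r / 2 ^ ⌈r⌉₊ ≤ 1 := by
  rw [div_le_one (by positivity)]
  exact (Nat.le_ceil r).trans (by exact_mod_cast (Nat.lt_two_pow_self).le)

lemma exp_eq_exp_div_two_pow (r : ℚ) (j : ℕ) : exp r = exp (2 ^ j * ((r / 2 ^ j : ℚ) : ℝ)) := by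
  push_cast
  rw [mul_div_cancel₀ _ (by positivity)]

lemma exp_le_expUpperNonneg {r : ℚ} (hr : 0 ≤ r) : exp r ≤ expUpperNonneg r := by
  rw [exp_eq_exp_div_two_pow r ⌈r⌉₊]
  exact exp_le_squareUp (exp_le_expUpperSmall (by positivity) (div_two_pow_ceil_le_one r)) _

lemma expLowerNonneg_le_exp {r : ℚ} (hr : 0 ≤ r) :
    1 ≤ expLowerNonneg r ∧ expLowerNonneg r ≤ exp r := by
  rw [exp_eq_exp_div_two_pow r ⌈r⌉₊]
  obtain ⟨h1, h⟩ := expLowerSmall_le_exp (show 0 ≤ r / 2 ^ ⌈r⌉₊ by positivity)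
  exact squareDown_le_exp h1 h _

def expUpper (r : ℚ) : ℚ :=
  if 0 ≤ r then expUpperNonneg r else roundUp (1 / expLowerNonneg (-r))

def expLower (r : ℚ) : ℚ :=
  if 0 ≤ r then expLowerNonneg r else roundDown (1 / expUpperNonneg (-r))

theorem exp_le_expUpper (r : ℚ) : exp r ≤ expUpper r := by
  unfold expUpper
  split_ifs with hr
  · exact exp_le_expUpperNonneg hr
  · obtain ⟨hone, hle⟩ := expLowerNonneg_le_exp (neg_nonneg.2 (not_le.1 hr).le)
    have hpos : (0 : ℝ) < expLowerNonneg (-r) := by exact_mod_cast zero_lt_one.trans_le hone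
    calc exp r = 1 / exp (-r : ℚ) := by push_cast; rw [exp_neg, one_div, inv_inv]
      _ ≤ 1 / expLowerNonneg (-r) := one_div_le_one_div_of_le hpos hle
      _ ≤ _ := by exact_mod_cast le_roundUp _

theorem expLower_le_exp (r : ℚ) : expLower r ≤ exp r := by
  unfold expLower
  split_ifs with hr
  · exact (expLowerNonneg_le_exp hr).2
  · calc ((roundDown (1 / expUpperNonneg (-r)) : ℚ) : ℝ) ≤ 1 / expUpperNonneg (-r) := by
          exact_mod_cast roundDown_le _
      _ ≤ 1 / exp (-r : ℚ) := one_div_le_one_div_of_le (exp_pos _)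
          (exp_le_expUpperNonneg (neg_nonneg.2 (not_le.1 hr).le))
      _ = exp r := by push_cast; rw [exp_neg, one_div, inv_inv]

def coshUpper (r : ℚ) : ℚ := (expUpper r + expUpper (-r)) / 2

def coshLower (r : ℚ) : ℚ := (expLower r + expLower (-r)) / 2

def sinhUpper (r : ℚ) : ℚ := (expUpper r - expLower (-r)) / 2

def sinhLower (r : ℚ) : ℚ := (expLower r - expUpper (-r)) / 2

lemma cosh_le_coshUpper (r : ℚ) : cosh r ≤ coshUpper r := by
  have := exp_le_expUpper (-r)
  push_cast [coshUpper, cosh_eq] at this ⊢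
  linarith [exp_le_expUpper r]

lemma coshLower_le_cosh (r : ℚ) : coshLower r ≤ cosh r := by
  have := expLower_le_exp (-r)
  push_cast [coshLower, cosh_eq] at this ⊢
  linarith [expLower_le_exp r]

lemma sinh_le_sinhUpper (r : ℚ) : sinh r ≤ sinhUpper r := by
  have := expLower_le_exp (-r)
  push_cast [sinhUpper, sinh_eq] at this ⊢
  linarith [exp_le_expUpper r]

lemma sinhLower_le_sinh (r : ℚ) : sinhLower r ≤ sinh r := by
  have := exp_le_expUpper (-r)
  push_cast [sinhLower, sinh_eq] at this ⊢
  linarith [expLower_le_exp r]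

def cellBound (x a b : ℚ) : ℚ :=
  (b - a) * expUpper (-(x * coshLower ((a + b) / 2))) *
    coshUpper (x * sinhUpper ((a + b) / 2) * ((b - a) / 2))

def tailBound (x T : ℚ) : ℚ := expUpper (-(x * sinhLower T)) / x

/-- Upper bound for `∫ t in Ioi a, exp (-x * cosh t)` from `n` cells of width `h`
and the tail beyond `a + n * h`. -/
def quadratureBound (x h : ℚ) : ℕ → ℚ → ℚ
  | 0, a => tailBound x a
  | n + 1, a => cellBound x a (a + h) + quadratureBound x h n (a + h)

lemma intervalIntegral_le_cellBound {x a b : ℚ} (hx : 0 ≤ x) (ha : 0 ≤ a) (hab : a ≤ b) :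
    ∫ t in (a : ℝ)..b, exp (-x * cosh t) ≤ cellBound x a b := by
  set m := (a + b) / 2
  set d := (b - a) / 2
  have hx' : (0 : ℝ) ≤ x := by exact_mod_cast hx
  have hm : (0 : ℝ) ≤ m := Rat.cast_nonneg.2 (by simp only [m]; linarith)
  have hd : (0 : ℝ) ≤ d := Rat.cast_nonneg.2 (by simp only [d]; linarith)
  have hexp : exp (-x * cosh m) ≤ expUpper (-(x * coshLower m)) := by
    refine le_trans (exp_le_exp.2 ?_) (exp_le_expUpper _)
    rw [Rat.cast_neg, Rat.cast_mul, neg_mul]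
    exact neg_le_neg (mul_le_mul_of_nonneg_left (coshLower_le_cosh m) hx')
  have hsinh : x * sinh m * d ≤ ((x * sinhUpper m * d : ℚ) : ℝ) := by
    rw [Rat.cast_mul, Rat.cast_mul]
    gcongr
    exact sinh_le_sinhUpper m
  have hcosh : cosh (x * sinh m * d) ≤ coshUpper (x * sinhUpper m * d) := by
    refine le_trans ?_ (cosh_le_coshUpper _)
    have : 0 ≤ x * sinh m * d := mul_nonneg (mul_nonneg hx' (sinh_nonneg_iff.2 hm)) hd
    rw [cosh_le_cosh, abs_of_nonneg this, abs_of_nonneg (this.trans hsinh)]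
    exact hsinh
  have hcell := intervalIntegral_exp_neg_mul_cosh_le hx' (by exact_mod_cast hab : (a : ℝ) ≤ b)
  rw [show ((a : ℝ) + b) / 2 = m by push_cast [m]; ring,
    show ((b : ℝ) - a) / 2 = d by push_cast [d]; ring] at hcell
  refine hcell.trans ?_
  rw [cellBound, Rat.cast_mul, Rat.cast_mul, Rat.cast_sub]
  have hba : (0 : ℝ) ≤ b - a := by exact_mod_cast sub_nonneg.2 hab
  exact mul_le_mul (mul_le_mul_of_nonneg_left hexp hba) hcosh (cosh_pos _).le
    (mul_nonneg hba ((exp_pos _).le.trans hexp))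

lemma integral_Ioi_le_tailBound {x : ℚ} (hx : 0 < x) (T : ℚ) :
    ∫ t in Ioi (T : ℝ), exp (-x * cosh t) ≤ tailBound x T := by
  have hx' : (0 : ℝ) < x := by exact_mod_cast hx
  refine (integral_exp_neg_mul_cosh_le hx' T).trans ?_
  rw [tailBound, Rat.cast_div]
  gcongr
  refine le_trans (exp_le_exp.2 ?_) (exp_le_expUpper _)
  rw [Rat.cast_neg, Rat.cast_mul, neg_mul]
  exact neg_le_neg (mul_le_mul_of_nonneg_left (sinhLower_le_sinh T) hx'.le)

theorem integral_Ioi_le_quadratureBound {x h : ℚ} (hx : 0 < x) (hh : 0 ≤ h) (n : ℕ) {a : ℚ}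
    (ha : 0 ≤ a) : ∫ t in Ioi (a : ℝ), exp (-x * cosh t) ≤ quadratureBound x h n a := by
  induction n generalizing a with
  | zero => exact integral_Ioi_le_tailBound hx a
  | succ n ih =>
    have hx' : (0 : ℝ) < x := by exact_mod_cast hx
    rw [quadratureBound, Rat.cast_add, ← intervalIntegral.integral_interval_add_Ioi
      (integrableOn_exp_neg_mul_cosh hx' _) (integrableOn_exp_neg_mul_cosh hx' _)]
    exact add_le_add (intervalIntegral_le_cellBound hx.le ha (by linarith))
      (by exact_mod_cast ih (a := a + h) (by linarith))

theorem besselK0_le_quadratureBound {x h : ℚ} (hx : 0 < x) (hh : 0 ≤ h) (n : ℕ) :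
    besselK0 x ≤ quadratureBound x h n 0 := by
  simpa only [besselK0, Rat.cast_zero] using integral_Ioi_le_quadratureBound hx hh n le_rfl

end RatBounds

open RatBounds in
lemma besselK0_lt_neg_two_log_729 : besselK0 (729 / 1000) < -2 * log (729 / 1000) := by
  have hK := besselK0_le_quadratureBound (x := 729 / 1000) (h := 1 / 10) (by norm_num)
    (by norm_num) 40
  -- 40 cells of width `1/10`, then the tail beyond `4`: `B ≈ 0.63185 < -2 log 0.729 ≈ 0.63216`
  set B := quadratureBound (729 / 1000) (1 / 10) 40 0
  have hcert : (729 / 1000 : ℚ) < expLower (-(B / 2)) := by decide +kernel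
  have hlog : log (729 / 1000) < -(B / 2 : ℝ) := by
    rw [log_lt_iff_lt_exp (by norm_num)]
    calc (729 / 1000 : ℝ) = ((729 / 1000 : ℚ) : ℝ) := by norm_num
      _ < expLower (-(B / 2)) := by exact_mod_cast hcert
      _ ≤ exp (-(B / 2) : ℚ) := expLower_le_exp _
      _ = exp (-(B / 2 : ℝ)) := by push_cast; rfl
  norm_num at hK
  linarith

/-- For `0 < x < 0.729`: `K_0(x) < -2 log x`. -/
theorem besselK0_lt_neg_two_log (x : ℝ) (hx0 : 0 < x) (hx1 : x < 0.729) :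
    besselK0 x < -2 * Real.log x := by
  have hx729 : x < 729 / 1000 := by norm_num at hx1; exact hx1
  have hmono := besselK0_add_log_monotoneOn hx0 (by norm_num : (729 / 1000 : ℝ) ∈ Ioi 0) hx729.le
  have hlog := log_lt_log hx0 hx729
  simp only at hmono
  linarith [besselK0_lt_neg_two_log_729]
end
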